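/- Let A = (a_{ij}) be an n×n real matrix and let 2 ≤ p < ∞. Then Σ_{i=1}^n Σ_{j=1}^n ( |Σ_{k=1}^n a_{ik} − Σ_{k=1}^n a_{jk}|^p + |Σ_{k=1}^n a_{ki} − Σ_{k=1}^n a_{kj}|^p ) ≤ ((2n)^p / 2) · Σ_{i=1}^n Σ_{j=1}^n |a_{ij}|^p. -/

import Mathlib

/-!
The map `T` sending a matrix to its row-sum differences and column-sum differences is
interpolated between `ℓ²` and `ℓ^∞` (Riesz–Thorin, via the Hadamard three-lines theorem).
On `ℓ²`, the identity `∑ᵢⱼ ‖uᵢ - uⱼ‖² = 2n ∑ᵢ ‖uᵢ‖² - 2 ‖∑ᵢ uᵢ‖²` bounds the row part by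
`2n² ∑ ‖aᵢⱼ‖² - 2n ∑ₖ ‖cₖ‖²` (`cₖ` the column sums) and the column part by `2n ∑ₖ ‖cₖ‖²`,
so `‖T‖₂² ≤ 2n²`; trivially `‖T‖_∞ ≤ 2n`. Interpolation gives
`‖T‖_p^p ≤ 2n² (2n)^(p-2) = (2n)^p / 2`.
-/

open Complex ComplexConjugate Finset

/-- A power `z ^ w` that keeps the phase of `z` and is entire in `w`. -/
noncomputable def phasePow (z w : ℂ) : ℂ :=
  if z = 0 then 0 else z / ‖z‖ * exp (w * Real.log ‖z‖)

namespace phasePow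

lemma zero_left (w : ℂ) : phasePow 0 w = 0 := if_pos rfl

lemma norm_of_ne_zero {z : ℂ} (hz : z ≠ 0) (w : ℂ) : ‖phasePow z w‖ = ‖z‖ ^ w.re := by
  have hpos : 0 < ‖z‖ := norm_pos_iff.mpr hz
  rw [phasePow, if_neg hz, norm_mul, norm_div, norm_real, norm_norm, div_self hpos.ne', one_mul,
    norm_exp, re_mul_ofReal, Real.rpow_def_of_pos hpos, mul_comm]

lemma norm_of_re_ne_zero (z : ℂ) {w : ℂ} (hw : w.re ≠ 0) : ‖phasePow z w‖ = ‖z‖ ^ w.re := by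
  rcases eq_or_ne z 0 with rfl | hz
  · rw [zero_left, norm_zero, Real.zero_rpow hw]
  · exact norm_of_ne_zero hz w

lemma norm_le_one_of_re_eq_zero (z : ℂ) {w : ℂ} (hw : w.re = 0) : ‖phasePow z w‖ ≤ 1 := by
  rcases eq_or_ne z 0 with rfl | hz
  · simp [zero_left]
  · rw [norm_of_ne_zero hz, hw, Real.rpow_zero]

lemma norm_le_max_one_rpow (z : ℂ) {w : ℂ} {P : ℝ} (hw : 0 ≤ w.re) (hwP : w.re ≤ P) :
    ‖phasePow z w‖ ≤ max 1 ‖z‖ ^ P := by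
  rcases eq_or_ne z 0 with rfl | hz
  · rw [zero_left, norm_zero]
    exact Real.rpow_nonneg (zero_le_one.trans (le_max_left _ _)) _
  · rw [norm_of_ne_zero hz]
    calc ‖z‖ ^ w.re ≤ max 1 ‖z‖ ^ w.re := Real.rpow_le_rpow (norm_nonneg z) (le_max_right _ _) hw
      _ ≤ max 1 ‖z‖ ^ P := Real.rpow_le_rpow_of_exponent_le (le_max_left _ _) hwP

lemma sq_norm_of_re_eq_half {q : ℝ} (hq : q ≠ 0) (z : ℂ) {w : ℂ} (hw : w.re = q / 2) :
    ‖phasePow z w‖ ^ 2 = ‖z‖ ^ q := by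
  rw [norm_of_re_ne_zero z (by rw [hw]; exact div_ne_zero hq two_ne_zero), hw,
    ← Real.rpow_natCast, ← Real.rpow_mul (norm_nonneg z)]
  norm_num

lemma one_right (z : ℂ) : phasePow z 1 = z := by
  rcases eq_or_ne z 0 with rfl | hz
  · exact zero_left 1
  · have hpos : 0 < ‖z‖ := norm_pos_iff.mpr hz
    rw [phasePow, if_neg hz, one_mul, ← ofReal_exp, Real.exp_log hpos,
      div_mul_cancel₀ _ (ofReal_ne_zero.mpr hpos.ne')]

lemma conj_mul_self (z : ℂ) {q : ℝ} (hq : 0 < q) :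
    phasePow (conj z) (q - 1 : ℝ) * z = (‖z‖ ^ q : ℝ) := by
  rcases eq_or_ne z 0 with rfl | hz
  · rw [mul_zero, norm_zero, Real.zero_rpow hq.ne', ofReal_zero]
  · have hpos : 0 < ‖z‖ := norm_pos_iff.mpr hz
    have hexp : exp ((q - 1 : ℝ) * Real.log ‖z‖) = (‖z‖ ^ (q - 1) : ℝ) := by
      rw [← ofReal_mul, ← ofReal_exp, Real.rpow_def_of_pos hpos, mul_comm]
    rw [phasePow, if_neg ((map_ne_zero _).mpr hz), norm_conj, hexp, Real.rpow_sub_one hpos.ne',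
      div_mul_eq_mul_div, div_mul_eq_mul_div, mul_right_comm, conj_mul']
    have hz' : (‖z‖ : ℂ) ≠ 0 := ofReal_ne_zero.mpr hpos.ne'
    push_cast
    field_simp

lemma differentiable (z : ℂ) : Differentiable ℂ (phasePow z) := by
  unfold phasePow
  split_ifs
  · exact differentiable_const 0
  · exact (differentiable_exp.comp (differentiable_id.mul_const _)).const_mul _

end phasePow

lemma le_mul_rpow_of_le_sqrt_rpow_mul_rpow {L A B p : ℝ} (hL : 0 < L) (hA : 0 ≤ A) (hB : 0 ≤ B)
    (hp : 0 < p) (h : L ≤ √(L * A) ^ (2 / p) * (L * B) ^ (1 - 2 / p)) : L ≤ A * B ^ (p - 2) := by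
  have h' := Real.rpow_le_rpow hL.le h hp.le
  rw [Real.mul_rpow (by positivity) (by positivity), ← Real.rpow_mul (Real.sqrt_nonneg _),
    ← Real.rpow_mul (by positivity), div_mul_cancel₀ 2 hp.ne', sub_mul, one_mul,
    div_mul_cancel₀ 2 hp.ne', Real.rpow_two, Real.sq_sqrt (by positivity),
    Real.mul_rpow hL.le hB] at h'
  have hLp : L ^ p = L ^ (p - 2) * L ^ 2 := by
    rw [← Real.rpow_natCast, ← Real.rpow_add hL]; norm_num
  have hc : 0 < L ^ (p - 2) * L := by positivity
  refine le_of_mul_le_mul_left ?_ hc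
  calc L ^ (p - 2) * L * L = L ^ p := by rw [hLp]; ring
    _ ≤ L * A * (L ^ (p - 2) * B ^ (p - 2)) := h'
    _ = L ^ (p - 2) * L * (A * B ^ (p - 2)) := by ring

section Interpolation

variable {ι κ : Type*} [Fintype ι]

/-- With `y = T x`, the pairing `∑ᵢ ψᵢ(z) (T φ(z))ᵢ` of `φ(z) = x ^ (p (1 - z) / 2)` and
`ψ(z) = conj y ^ (p (1 + z) / 2)` (phase-preserving powers): on `re z = 0` both factors are
`ℓ²`-controlled, on `re z = 1` they are `ℓ^∞`- resp. `ℓ¹`-controlled, and at `z = 1 - 2 / p`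
it equals `∑ᵢ ‖yᵢ‖ ^ p`. -/
noncomputable def interpPairing (T : (κ → ℂ) →ₗ[ℂ] (ι → ℂ)) (x : κ → ℂ) (p : ℝ) (z : ℂ) : ℂ :=
  ∑ i, phasePow (conj (T x i)) ((p / 2 : ℝ) * (1 + z)) *
    T (fun k => phasePow (x k) ((p / 2 : ℝ) * (1 - z))) i

variable (T : (κ → ℂ) →ₗ[ℂ] (ι → ℂ)) (x : κ → ℂ) {p : ℝ}

lemma differentiable_interpPairing [Fintype κ] (p : ℝ) :
    Differentiable ℂ (interpPairing T x p) := by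
  have hφ : Differentiable ℂ fun z => T (fun k => phasePow (x k) ((p / 2 : ℝ) * (1 - z))) :=
    (LinearMap.toContinuousLinearMap T).differentiable.comp <| differentiable_pi.mpr fun k =>
      (phasePow.differentiable _).comp
        (((differentiable_const _).sub differentiable_id).const_mul _)
  exact Differentiable.fun_sum fun i _ =>
    ((phasePow.differentiable _).comp
      (((differentiable_const _).add differentiable_id).const_mul _)).mul
      (differentiable_pi.mp hφ i)

lemma bddAbove_norm_interpPairing [Fintype κ] (hp : 0 ≤ p) :
    BddAbove ((norm ∘ interpPairing T x p) '' HadamardThreeLines.verticalClosedStrip 0 1) := by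
  set T' := LinearMap.toContinuousLinearMap T
  set R := ∑ k, max 1 ‖x k‖ ^ p
  refine ⟨∑ i, max 1 ‖T x i‖ ^ p * (‖T'‖ * R), ?_⟩
  rintro _ ⟨z, ⟨hz₀, hz₁⟩, rfl⟩
  have hφ : ‖fun k => phasePow (x k) ((p / 2 : ℝ) * (1 - z))‖ ≤ R :=
    (pi_norm_le_iff_of_nonneg (by positivity)).mpr fun k =>
      (phasePow.norm_le_max_one_rpow _ (by simp; nlinarith) (by simp; nlinarith)).trans
        (single_le_sum (f := fun k => max 1 ‖x k‖ ^ p) (fun k _ => by positivity) (mem_univ k))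
  refine (norm_sum_le _ _).trans (sum_le_sum fun i _ => ?_)
  have hψ : ‖phasePow (conj (T x i)) ((p / 2 : ℝ) * (1 + z))‖ ≤ max 1 ‖T x i‖ ^ p := by
    refine (phasePow.norm_le_max_one_rpow _ ?_ ?_).trans_eq (by rw [norm_conj]) <;>
      simp <;> nlinarith
  rw [norm_mul]
  exact mul_le_mul hψ ((norm_le_pi_norm _ i).trans (T'.le_opNorm_of_le hφ)) (norm_nonneg _)
    (by positivity)

lemma norm_interpPairing_le_of_re_eq_zero [Fintype κ] (hp : 0 < p) {M₂ : ℝ}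
    (h₂ : ∀ v, ∑ i, ‖T v i‖ ^ 2 ≤ M₂ * ∑ k, ‖v k‖ ^ 2) {z : ℂ} (hz : z.re = 0) :
    ‖interpPairing T x p z‖ ≤ √((∑ i, ‖T x i‖ ^ p) * (M₂ * ∑ k, ‖x k‖ ^ p)) := by
  set φ := fun k => phasePow (x k) ((p / 2 : ℝ) * (1 - z))
  set ψ := fun i => phasePow (conj (T x i)) ((p / 2 : ℝ) * (1 + z))
  have hψ : ∑ i, ‖ψ i‖ ^ 2 = ∑ i, ‖T x i‖ ^ p := sum_congr rfl fun i _ => by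
    rw [phasePow.sq_norm_of_re_eq_half hp.ne' _ (by simp [hz]), norm_conj]
  have hφ : ∑ k, ‖φ k‖ ^ 2 = ∑ k, ‖x k‖ ^ p := sum_congr rfl fun k _ =>
    phasePow.sq_norm_of_re_eq_half hp.ne' _ (by simp [hz])
  rw [← abs_norm]
  refine Real.abs_le_sqrt ?_
  calc ‖interpPairing T x p z‖ ^ 2 ≤ (∑ i, ‖ψ i‖ * ‖T φ i‖) ^ 2 := by
        gcongr; exact norm_sum_le_of_le _ fun i _ => (norm_mul _ _).le
    _ ≤ (∑ i, ‖ψ i‖ ^ 2) * ∑ i, ‖T φ i‖ ^ 2 := sum_mul_sq_le_sq_mul_sq _ _ _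
    _ ≤ (∑ i, ‖T x i‖ ^ p) * (M₂ * ∑ k, ‖x k‖ ^ p) := by
        rw [hψ, ← hφ]; gcongr; exact h₂ φ

lemma norm_interpPairing_le_of_re_eq_one (hp : 0 < p) {M : ℝ}
    (hinf : ∀ v : κ → ℂ, (∀ k, ‖v k‖ ≤ 1) → ∀ i, ‖T v i‖ ≤ M) {z : ℂ} (hz : z.re = 1) :
    ‖interpPairing T x p z‖ ≤ (∑ i, ‖T x i‖ ^ p) * M := by
  rw [sum_mul]
  refine norm_sum_le_of_le _ fun i _ => ?_
  have hre : (((p / 2 : ℝ) : ℂ) * (1 + z)).re = p := by simp [hz]; ring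
  rw [norm_mul, phasePow.norm_of_re_ne_zero _ (by rw [hre]; exact hp.ne'), norm_conj, hre]
  gcongr
  exact hinf _ (fun k => phasePow.norm_le_one_of_re_eq_zero _ (by simp [hz])) i

lemma interpPairing_one_sub_two_div (hp : 0 < p) :
    interpPairing T x p (1 - 2 / p : ℝ) = (∑ i, ‖T x i‖ ^ p : ℝ) := by
  have hp' : (p : ℂ) ≠ 0 := ofReal_ne_zero.mpr hp.ne'
  have h₁ : ((p / 2 : ℝ) : ℂ) * (1 - ((1 - 2 / p : ℝ) : ℂ)) = 1 := by
    push_cast; field_simp; ring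
  have h₂ : ((p / 2 : ℝ) : ℂ) * (1 + ((1 - 2 / p : ℝ) : ℂ)) = ((p - 1 : ℝ) : ℂ) := by
    push_cast; field_simp; ring
  simp only [interpPairing, h₁, h₂, phasePow.one_right, phasePow.conj_mul_self _ hp]
  push_cast
  rfl

theorem sum_norm_rpow_le_of_sum_sq_le_of_forall_norm_le [Fintype κ] {M₂ M : ℝ} (hM₂ : 0 ≤ M₂)
    (hM : 0 ≤ M) (h₂ : ∀ v, ∑ i, ‖T v i‖ ^ 2 ≤ M₂ * ∑ k, ‖v k‖ ^ 2)
    (hinf : ∀ v : κ → ℂ, (∀ k, ‖v k‖ ≤ 1) → ∀ i, ‖T v i‖ ≤ M) (hp : 2 ≤ p) :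
    ∑ i, ‖T x i‖ ^ p ≤ M₂ * M ^ (p - 2) * ∑ k, ‖x k‖ ^ p := by
  have hp₀ : 0 < p := by linarith
  rcases (show 0 ≤ ∑ i, ‖T x i‖ ^ p by positivity).eq_or_lt with hL | hL
  · rw [← hL]; positivity
  have hθ : ((1 - 2 / p : ℝ) : ℂ) ∈ HadamardThreeLines.verticalClosedStrip 0 1 := by
    have : 2 / p ≤ 1 := (div_le_one hp₀).mpr hp
    simp only [HadamardThreeLines.verticalClosedStrip, Set.mem_preimage, ofReal_re, Set.mem_Icc]
    constructor <;> linarith [div_pos two_pos hp₀]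
  have key := HadamardThreeLines.norm_le_interp_of_mem_verticalClosedStrip₀₁' _ hθ
    (differentiable_interpPairing T x p).diffContOnCl (bddAbove_norm_interpPairing T x hp₀.le)
    (fun z hz => norm_interpPairing_le_of_re_eq_zero T x hp₀ h₂ hz)
    (fun z hz => norm_interpPairing_le_of_re_eq_one T x hp₀ hinf hz)
  rw [interpPairing_one_sub_two_div T x hp₀, norm_real, Real.norm_of_nonneg hL.le, ofReal_re,
    sub_sub_cancel] at key
  rw [mul_right_comm]
  exact le_mul_rpow_of_le_sqrt_rpow_mul_rpow hL (by positivity) hM hp₀ key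

end Interpolation

lemma sum_sum_norm_sub_sq {E ι : Type*} [NormedAddCommGroup E] [InnerProductSpace ℝ E]
    [Fintype ι] (u : ι → E) :
    ∑ i, ∑ j, ‖u i - u j‖ ^ 2 = 2 * Fintype.card ι * ∑ i, ‖u i‖ ^ 2 - 2 * ‖∑ i, u i‖ ^ 2 := by
  have hsum : ‖∑ i, u i‖ ^ 2 = ∑ i, ∑ j, inner ℝ (u i) (u j) := by
    rw [← real_inner_self_eq_norm_sq, sum_inner]; simp only [inner_sum]
  simp only [norm_sub_sq_real, sum_add_distrib, sum_sub_distrib, sum_const, card_univ,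
    nsmul_eq_mul, ← mul_sum, hsum]
  ring

lemma norm_sum_sq_le_card_mul {E ι : Type*} [SeminormedAddCommGroup E] [Fintype ι] (d : ι → E) :
    ‖∑ i, d i‖ ^ 2 ≤ Fintype.card ι * ∑ i, ‖d i‖ ^ 2 :=
  (pow_le_pow_left₀ (norm_nonneg _) (norm_sum_le _ _) 2).trans (sq_sum_le_card_mul_sum_sq ..)

section RowColumnSums

variable {R : Type*} (n : ℕ)

def rowColSumDiff [AddCommGroup R] (x : Fin n × Fin n → R) :
    (Fin n × Fin n) ⊕ (Fin n × Fin n) → R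
  | .inl (i, j) => ∑ k, x (i, k) - ∑ k, x (j, k)
  | .inr (i, j) => ∑ k, x (k, i) - ∑ k, x (k, j)

def rowColSumDiffLinearMap (𝕜 : Type*) [Semiring 𝕜] [AddCommGroup R] [Module 𝕜 R] :
    (Fin n × Fin n → R) →ₗ[𝕜] ((Fin n × Fin n) ⊕ (Fin n × Fin n) → R) where
  toFun := rowColSumDiff n
  map_add' x y := by
    ext (⟨i, j⟩ | ⟨i, j⟩) <;> simp only [rowColSumDiff, Pi.add_apply, sum_add_distrib] <;> abel
  map_smul' c x := by
    ext (⟨i, j⟩ | ⟨i, j⟩) <;> simp [rowColSumDiff, smul_sum, smul_sub]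

lemma rowColSumDiff_ofReal (x : Fin n × Fin n → ℝ) (m) :
    rowColSumDiff n (fun k => (x k : ℂ)) m = rowColSumDiff n x m := by
  rcases m with ⟨i, j⟩ | ⟨i, j⟩ <;> simp [rowColSumDiff]

lemma norm_rowColSumDiff_le [SeminormedAddCommGroup R] {x : Fin n × Fin n → R}
    (hx : ∀ k, ‖x k‖ ≤ 1) (m) : ‖rowColSumDiff n x m‖ ≤ 2 * n := by
  have hsum : ∀ f : Fin n → Fin n × Fin n, ‖∑ k, x (f k)‖ ≤ n := fun f => by
    simpa using norm_sum_le_of_le univ fun k _ => hx (f k)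
  rcases m with ⟨i, j⟩ | ⟨i, j⟩
  · exact (norm_sub_le _ _).trans (by linarith [hsum (i, ·), hsum (j, ·)])
  · exact (norm_sub_le _ _).trans (by linarith [hsum (·, i), hsum (·, j)])

variable {E : Type*} [NormedAddCommGroup E] [InnerProductSpace ℝ E]

lemma sum_sum_norm_rowSum_sub_sq_le (x : Fin n × Fin n → E) :
    ∑ i, ∑ j, ‖∑ k, x (i, k) - ∑ k, x (j, k)‖ ^ 2 ≤
      2 * n ^ 2 * ∑ k, ‖x k‖ ^ 2 - 2 * n * ∑ k, ‖∑ i, x (i, k)‖ ^ 2 := by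
  calc ∑ i, ∑ j, ‖∑ k, x (i, k) - ∑ k, x (j, k)‖ ^ 2
      ≤ ∑ i, ∑ j, n * ∑ k, ‖x (i, k) - x (j, k)‖ ^ 2 := by
        gcongr with i _ j _
        simpa [← sum_sub_distrib] using norm_sum_sq_le_card_mul fun k => x (i, k) - x (j, k)
    _ = n * ∑ k, ∑ i, ∑ j, ‖x (i, k) - x (j, k)‖ ^ 2 := by
        simp only [← mul_sum]; congr 1
        exact (sum_congr rfl fun i _ => sum_comm).trans sum_comm
    _ = 2 * n ^ 2 * ∑ k, ‖x k‖ ^ 2 - 2 * n * ∑ k, ‖∑ i, x (i, k)‖ ^ 2 := by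
        simp only [sum_sum_norm_sub_sq, Fintype.card_fin, sum_sub_distrib, ← mul_sum,
          Fintype.sum_prod_type, sum_comm (γ := Fin n) (f := fun i k => ‖x (i, k)‖ ^ 2)]
        ring

lemma sum_norm_rowColSumDiff_sq_le (x : Fin n × Fin n → E) :
    ∑ m, ‖rowColSumDiff n x m‖ ^ 2 ≤ 2 * n ^ 2 * ∑ k, ‖x k‖ ^ 2 := by
  have hcol : ∑ i, ∑ j, ‖∑ k, x (k, i) - ∑ k, x (k, j)‖ ^ 2 ≤
      2 * n * ∑ k, ‖∑ i, x (i, k)‖ ^ 2 := by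
    rw [sum_sum_norm_sub_sq (fun i => ∑ k, x (k, i)), Fintype.card_fin]
    linarith [sq_nonneg ‖∑ i, ∑ k, x (k, i)‖]
  rw [Fintype.sum_sum_type, Fintype.sum_prod_type, Fintype.sum_prod_type]
  simp only [rowColSumDiff]
  linarith [sum_sum_norm_rowSum_sub_sq_le n x]

end RowColumnSums

theorem stmt8 (n : ℕ) (a : Fin n → Fin n → ℝ) (p : ℝ) (hp : 2 ≤ p) :
    ∑ i, ∑ j,
        (|∑ k, a i k - ∑ k, a j k| ^ p + |∑ k, a k i - ∑ k, a k j| ^ p) ≤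
      (2 * (n : ℝ)) ^ p / 2 * ∑ i, ∑ j, |a i j| ^ p := by
  have key := sum_norm_rpow_le_of_sum_sq_le_of_forall_norm_le (rowColSumDiffLinearMap n ℂ)
    (fun k => (a k.1 k.2 : ℂ)) (by positivity) (by positivity) (sum_norm_rowColSumDiff_sq_le n)
    (fun _ hx => norm_rowColSumDiff_le n hx) hp
  have hconst : 2 * (n : ℝ) ^ 2 * (2 * n) ^ (p - 2) = (2 * n) ^ p / 2 := by
    rcases n.eq_zero_or_pos with rfl | hn
    · simp [Real.zero_rpow (show p ≠ 0 by linarith)]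
    · rw [Real.rpow_sub (by positivity), Real.rpow_two]; field_simp
  simp only [rowColSumDiffLinearMap, LinearMap.coe_mk, AddHom.coe_mk, rowColSumDiff_ofReal,
    norm_real, Real.norm_eq_abs, hconst] at key
  rw [Fintype.sum_sum_type, Fintype.sum_prod_type, Fintype.sum_prod_type, Fintype.sum_prod_type,
    ← sum_add_distrib] at key
  simpa only [rowColSumDiff, ← sum_add_distrib] using key
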